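/- arXiv:1902.06777 — 3 statements merged into one kernel-verified Lean document; each statement's English description precedes it below -/
import Mathlib

section
/- Let μ be a regular cardinal and I a μ-directed poset. If I is the union of a family of subsets ⟨I_i : i < α⟩ with α < μ, then there exists i < α such that I_i is cofinal in I. -/
open Cardinal

universe u

/-- A preorder is `μ`-directed if every subset of cardinality `< μ` has an upper bound. -/
def IsCardDirected (μ : Cardinal.{u}) (J : Type u) [Preorder J] : Prop :=
  ∀ S : Set J, #S < μ → ∃ b, ∀ s ∈ S, s ≤ b

/-- If a `μ`-directed poset `I` (`μ` regular) is covered by fewer than `μ` many subsets,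
then one of the subsets is cofinal in `I`. -/
theorem stmt0 {μ : Cardinal.{u}} (hμ : μ.IsRegular) {I : Type u} [PartialOrder I]
    (hdir : IsCardDirected μ I)
    {ι : Type u} (hι : #ι < μ) (f : ι → Set I) (hcov : ∀ x : I, ∃ i, x ∈ f i) :
    ∃ i, ∀ x : I, ∃ y ∈ f i, x ≤ y := by
  by_contra h
  push_neg at h
  choose x hx using h
  obtain ⟨b, hb⟩ := hdir (Set.range x) (lt_of_le_of_lt Cardinal.mk_range_le hι)
  obtain ⟨i, hi⟩ := hcov b
  exact (hx i b hi (hb _ ⟨i, rfl⟩)).elim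
end

section
/- If SCH holds above an infinite cardinal θ, then for every cardinal λ and every regular cardinal μ, λ^{<μ} ≤ λ⁺ + sup_{θ₀ < θ} θ₀^{<μ}. -/
open Cardinal

universe u

/-- `SCH` holds at `λ`: `λ^{cf λ} = max(2^{cf λ}, λ⁺)`. -/
def SCHAt (lam : Cardinal.{u}) : Prop :=
  lam ^ lam.ord.cof = max (2 ^ lam.ord.cof) (Order.succ lam)

/-!
Fix `ν < μ` and argue by induction on `λ`. Below `θ`, `λ ^ ν` is bounded by the supremum. If
`λ ≤ κ ^ ν` for some `κ < λ`, then `λ ^ ν = κ ^ ν` and induction applies. Otherwise `κ ^ ν < λ`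
for all `κ < λ`. If `ν < cf λ`, every map `ν → λ` is bounded below `λ`, so `λ ^ ν = λ`. If
`cf λ ≤ ν`, truncating along a cofinal sequence gives `λ ^ ν ≤ λ ^ cf λ = 2 ^ cf λ + λ⁺` by SCH,
and `2 ^ cf λ ≤ 2 ^ ν < λ`.
-/

open Order Set
open scoped Ordinal

section LinearOrder

variable {α β : Type u} [LinearOrder α]

theorem exists_forall_lt_of_mk_lt_cof (f : β → α) (hβ : #β < Order.cof α) :
    ∃ a, ∀ x, f x < a := by
  have hf : ¬ IsCofinal (range f) := fun hf => (cof_le hf |>.trans mk_range_le).not_gt hβ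
  obtain ⟨a, ha⟩ := not_isCofinal_iff.1 hf
  exact ⟨a, fun x => ha _ (mem_range_self x)⟩

theorem mk_arrow_le_of_mk_lt_cof (hα : ℵ₀ ≤ #α) (hβ : #β < Order.cof α)
    (h : ∀ a : α, #(Iio a) ^ #β ≤ #α) : #(β → α) ≤ #α := by
  choose bound hbound using fun f : β → α => exists_forall_lt_of_mk_lt_cof f hβ
  let F : (β → α) → Σ a : α, β → Iio a := fun f => ⟨bound f, fun x => ⟨f x, hbound f x⟩⟩
  have hF : F.Injective := fun f g hfg => by
    funext x
    exact congrArg (fun p : Σ a : α, β → Iio a => (p.2 x : α)) hfg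
  calc #(β → α) ≤ #(Σ a : α, β → Iio a) := mk_le_of_injective hF
    _ = sum fun a : α => #(Iio a) ^ #β := by simp only [mk_sigma, power_def]
    _ ≤ sum fun _ : α => #α := sum_le_sum _ _ h
    _ = #α := by rw [sum_const', mul_eq_self hα]

/-- Each `a` is recovered from its truncations `min a i` along a cofinal set `s`. -/
theorem mk_arrow_le_power_cof [NoMaxOrder α] (h : ∀ a : α, #(Iic a) ^ #β ≤ #α) :
    #(β → α) ≤ #α ^ Order.cof α := by
  obtain ⟨s, hs, hs_card⟩ := exists_cof_eq α
  let F : (β → α) → Π i : s, β → Iic (i : α) := fun f i x => ⟨min (f x) i, min_le_right _ _⟩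
  have hF : F.Injective := fun f g hfg => by
    funext x
    obtain ⟨b, hb⟩ := exists_gt (max (f x) (g x))
    obtain ⟨i, his, hbi⟩ := hs b
    have hfgi := congrArg Subtype.val (congrFun (congrFun hfg ⟨i, his⟩) x)
    have hfi : f x ≤ i := (le_max_left _ _).trans (hb.trans_le hbi).le
    have hgi : g x ≤ i := (le_max_right _ _).trans (hb.trans_le hbi).le
    simpa [F, hfi, hgi] using hfgi
  calc #(β → α) ≤ #(Π i : s, β → Iic (i : α)) := mk_le_of_injective hF
    _ = prod fun i : s => #(Iic (i : α)) ^ #β := by simp only [mk_pi, power_def]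
    _ ≤ prod fun _ : s => #α := prod_le_prod _ _ fun i => h i
    _ = #α ^ Order.cof α := by rw [prod_const', hs_card]

end LinearOrder

namespace Cardinal

theorem power_le_self_of_lt_cof {c ν : Cardinal.{u}} (hc : ℵ₀ ≤ c) (hν : ν < c.ord.cof)
    (h : ∀ d < c, d ^ ν ≤ c) : c ^ ν ≤ c := by
  induction c using Cardinal.inductionOn with | mk α
  induction ν using Cardinal.inductionOn with | mk β
  obtain ⟨_, _, hα⟩ := exists_ord_eq_type_lt α
  rw [hα, Ordinal.cof_type] at hν
  exact mk_arrow_le_of_mk_lt_cof hc hν fun a => h _ (mk_Iio_lt a hα)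

theorem power_le_power_cof {c ν : Cardinal.{u}} (hc : ℵ₀ ≤ c) (h : ∀ d < c, d ^ ν ≤ c) :
    c ^ ν ≤ c ^ c.ord.cof := by
  induction c using Cardinal.inductionOn with | mk α
  induction ν using Cardinal.inductionOn with | mk β
  obtain ⟨_, _, hα⟩ := exists_ord_eq_type_lt α
  have : NoMaxOrder α := by
    rw [← Ordinal.isSuccPrelimit_type_lt_iff, ← hα]
    exact (isSuccLimit_ord hc).isSuccPrelimit
  rw [hα, Ordinal.cof_type]
  exact mk_arrow_le_power_cof fun a => h _ (mk_Iic_lt a hα hc)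

end Cardinal

theorem SCHAt.power_le_succ {c ν : Cardinal.{u}} (hsch : SCHAt c) (hc : ℵ₀ ≤ c)
    (h : ∀ d < c, d ^ ν < c) : c ^ ν ≤ succ c := by
  have h' : ∀ d < c, d ^ ν ≤ c := fun d hd => (h d hd).le
  rcases lt_or_ge ν c.ord.cof with hν | hν
  · exact (power_le_self_of_lt_cof hc hν h').trans (le_succ c)
  have h2 : (2 : Cardinal) ^ c.ord.cof < c :=
    (power_le_power_left two_ne_zero hν).trans_lt (h 2 (natCast_lt_aleph0.trans_le hc))
  calc c ^ ν ≤ c ^ c.ord.cof := power_le_power_cof hc h'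
    _ = max (2 ^ c.ord.cof) (succ c) := hsch
    _ = succ c := max_eq_right (h2.le.trans (le_succ c))

theorem power_le_max_succ_of_sch {θ ν T : Cardinal.{u}} (hθ : ℵ₀ ≤ θ)
    (hsch : ∀ c, θ ≤ c → SCHAt c) (hT : ∀ d < θ, d ^ ν ≤ T) (c : Cardinal.{u}) :
    c ^ ν ≤ max (succ c) T := by
  induction c using WellFoundedLT.induction with | _ c ih
  rcases lt_or_ge c θ with hcθ | hθc
  · exact (hT c hcθ).trans (le_max_right _ _)
  have hc := hθ.trans hθc
  rcases lt_or_ge ν ℵ₀ with hν | hν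
  · exact (pow_le hc hν).trans ((le_succ c).trans (le_max_left _ _))
  by_cases hd : ∃ d < c, c ≤ d ^ ν
  · obtain ⟨d, hdc, hcd⟩ := hd
    calc c ^ ν ≤ (d ^ ν) ^ ν := power_le_power_right hcd
      _ = d ^ ν := by rw [← power_mul, mul_eq_self hν]
      _ ≤ max (succ d) T := ih d hdc
      _ ≤ max (succ c) T := max_le_max_right T (succ_le_succ hdc.le)
  push Not at hd
  exact ((hsch c hθc).power_le_succ hc hd).trans (le_max_left _ _)

theorem stmt2_general {θ : Cardinal.{u}} (hθ : ℵ₀ ≤ θ) (hsch : ∀ lam : Cardinal.{u}, θ ≤ lam → SCHAt lam)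
    (lam : Cardinal.{u}) {μ : Cardinal.{u}} :
    lam ^< μ ≤ max (Order.succ lam) (⨆ θ₀ : Set.Iio θ, (θ₀ : Cardinal.{u}) ^< μ) := by
  refine powerlt_le.2 fun ν hν => power_le_max_succ_of_sch hθ hsch (fun d hd => ?_) lam
  exact (le_powerlt d hν).trans (le_ciSup bddAbove_of_small (⟨d, hd⟩ : Set.Iio θ))

/-- If SCH holds above an infinite cardinal `θ`, then for every cardinal `λ` and every
regular `μ`, `λ^{<μ} ≤ max(λ⁺, sup_{θ₀ < θ} θ₀^{<μ})`. -/
theorem stmt2 {θ : Cardinal.{u}} (hθ : ℵ₀ ≤ θ) (hsch : ∀ lam : Cardinal.{u}, θ ≤ lam → SCHAt lam)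
    (lam : Cardinal.{u}) {μ : Cardinal.{u}} (hμ : μ.IsRegular) :
    lam ^< μ ≤ max (Order.succ lam) (⨆ θ₀ : Set.Iio θ, (θ₀ : Cardinal.{u}) ^< μ) :=
  stmt2_general hθ hsch lam
end

section
/- If SCH holds above an infinite cardinal θ and μ is regular, then every cardinal λ strictly greater than sup_{θ₀ < θ} θ₀^{<μ} which is not the successor of a cardinal of cofinality strictly less than μ is μ-closed. -/
open Cardinal

universe u

/-!
Write `S = sup_{θ₀ < θ} θ₀^{<μ}`. Powers `κ^c` are estimated by two classical bounds: if `c < cf κ`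
every function `c → κ` is bounded, so `κ^c ≤ κ · sup_{β<κ} β^c`; if `cf κ ≤ c` and `2^c < κ`, then
`κ` is singular, hence a limit, and `κ^c ≤ (sup_{β<κ} β^c)^{cf κ}`. With SCH above `θ` these give
`κ^c ≤ max(θ^c, κ⁺)` for `θ ≤ κ` and infinite `c` (by induction on `κ`), and `θ^c ≤ S⁺` for
infinite `c < μ`. So for `θ ≤ θ₀ < λ` all `θ₀^c` with `c < μ` are bounded by `max(S, θ₀)⁺`, which is
below `λ` unless `λ = max(S, θ₀)⁺`. In that case `cf max(S, θ₀) ≥ μ` by hypothesis, and then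
`max(S, θ₀)^c = max(S, θ₀)` for `c < μ`.
-/

open Order Set

namespace Cardinal

theorem prod_power {ι : Type u} (f : ι → Cardinal.{u}) (c : Cardinal.{u}) :
    prod f ^ c = prod fun i => f i ^ c := by
  induction c using Cardinal.inductionOn with | mk γ =>
  obtain ⟨β, rfl⟩ : ∃ β : ι → Type u, f = fun i => #(β i) :=
    ⟨fun i => (f i).out, funext fun i => (mk_out _).symm⟩
  simp only [← mk_pi, power_def]
  exact mk_congr (Equiv.piComm _)

theorem power_le_mul_of_lt_cof {κ c T : Cardinal.{u}} (hc : c < κ.ord.cof)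
    (hT : ∀ β < κ, β ^ c ≤ T) : κ ^ c ≤ κ * T := by
  induction κ using Cardinal.inductionOn with | mk α =>
  induction c using Cardinal.inductionOn with | mk γ =>
  obtain ⟨_, _, hα⟩ := exists_ord_eq_type_lt α
  rw [hα, Ordinal.cof_type] at hc
  have hbdd : ∀ f : γ → α, ∃ a, ∀ x, f x < a := by
    intro f
    have : ¬ IsCofinal (range f) := fun h => (mk_range_le.trans_lt hc).not_ge (Order.cof_le h)
    simpa [IsCofinal] using this
  choose bound hbound using hbdd
  have hinj : Function.Injective fun f : γ → α => (⟨bound f, fun x => ⟨f x, hbound f x⟩⟩ :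
      Σ a : α, γ → Iio a) := fun f g h =>
    funext fun x => congrArg (fun p : Σ a : α, γ → Iio a => (p.2 x : α)) h
  calc #α ^ #γ = #(γ → α) := power_def _ _
    _ ≤ #(Σ a : α, γ → Iio a) := mk_le_of_injective hinj
    _ = sum fun a : α => #(Iio a) ^ #γ := by simp only [mk_sigma, power_def]
    _ ≤ sum fun _ : α => T := sum_le_sum _ _ fun a => hT _ (mk_Iio_lt a hα)
    _ = #α * T := sum_const' _ _

theorem power_le_power_cof_of_isSuccLimit {κ c T : Cardinal.{u}} (hκ : IsSuccLimit κ)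
    (hT : ∀ β < κ, β ^ c ≤ T) : κ ^ c ≤ T ^ κ.ord.cof := by
  induction κ using Cardinal.inductionOn with | mk α =>
  obtain ⟨_, _, hα⟩ := exists_ord_eq_type_lt α
  have : NoMaxOrder α := by
    rw [← Ordinal.isSuccPrelimit_type_lt_iff, ← hα]
    exact (isSuccLimit_ord (aleph0_le_of_isSuccLimit hκ)).isSuccPrelimit
  obtain ⟨s, hs, hs'⟩ := Order.exists_cof_eq α
  -- König: `#α ≤ Σ_{i ∈ s} #(Iio i) < Π_{i ∈ s} #(Iio i)⁺` for a cofinal `s` of size `cf α`.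
  have hle : #α ≤ prod fun i : s => succ #(Iio i.1) := by
    refine (mk_iUnion_le_sum_mk.trans' ?_).trans (sum_lt_prod _ _ fun i => lt_succ _).le
    rw [← mk_univ, ← isCofinal_iff_iUnion_Iio_eq_univ.1 hs, iUnion_coe_set]
  calc #α ^ c ≤ (prod fun i : s => succ #(Iio i.1)) ^ c := power_le_power_right hle
    _ = prod fun i : s => succ #(Iio i.1) ^ c := prod_power _ _
    _ ≤ prod fun _ : s => T :=
      prod_le_prod _ _ fun i => hT _ (hκ.succ_lt (mk_Iio_lt i.1 hα))
    _ = T ^ (ord #α).cof := by rw [prod_const', hs', hα, Ordinal.cof_type]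

theorem aleph0_le_cof_ord {κ : Cardinal.{u}} (hκ : ℵ₀ ≤ κ) : ℵ₀ ≤ κ.ord.cof :=
  Ordinal.aleph0_le_cof_iff.2 (Ordinal.one_lt_cof_iff.2 (isSuccLimit_ord hκ))

theorem power_le_two_power_of_le_two_power {κ c : Cardinal.{u}} (hc : ℵ₀ ≤ c) (h : κ ≤ 2 ^ c) :
    κ ^ c ≤ 2 ^ c :=
  calc κ ^ c ≤ (2 ^ c) ^ c := power_le_power_right h
    _ = 2 ^ c := by rw [← power_mul, mul_eq_self hc]

theorem power_le_power_cof_of_cof_le {κ c T : Cardinal.{u}} (hc : ℵ₀ ≤ c)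
    (hcof : κ.ord.cof ≤ c) (h2T : 2 ^ c ≤ T) (hT : ∀ β < κ, β ^ c ≤ T) :
    κ ^ c ≤ T ^ κ.ord.cof := by
  rcases le_or_gt κ (2 ^ c) with hκ | hκ
  · rcases eq_or_ne κ 0 with rfl | hκ0
    · rw [zero_power (aleph0_pos.trans_le hc).ne']
      exact zero_le
    calc κ ^ c ≤ T := (power_le_two_power_of_le_two_power hc hκ).trans h2T
      _ ≤ T ^ κ.ord.cof := self_le_power T
        (Cardinal.one_le_iff_ne_zero.2 (Ordinal.cof_eq_zero.not.2 (ord_eq_zero.not.2 hκ0)))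
  · have hsing : κ.IsSingular :=
      ⟨hc.trans ((cantor c).trans hκ).le, (hcof.trans_lt ((cantor c).trans hκ)).ne⟩
    exact power_le_power_cof_of_isSuccLimit hsing.isSuccLimit hT

theorem powerlt_le_of_forall_aleph0_le {a b B : Cardinal.{u}} (ha : ℵ₀ ≤ a) (haB : a ≤ B)
    (h : ∀ c, ℵ₀ ≤ c → c < b → a ^ c ≤ B) : a ^< b ≤ B :=
  powerlt_le.2 fun c hcb => (lt_or_ge c ℵ₀).elim (fun hc => (pow_le ha hc).trans haB)
    fun hc => h c hc hcb

end Cardinal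

section SCH

variable {θ κ c : Cardinal.{u}}

theorem power_le_max_of_schAt (hθ : ℵ₀ ≤ θ) (hsch : ∀ κ, θ ≤ κ → SCHAt κ) (hc : ℵ₀ ≤ c)
    (hθκ : θ ≤ κ) : κ ^ c ≤ max (θ ^ c) (succ κ) := by
  induction κ using WellFoundedLT.induction with
  | ind κ IH =>
  have hκ : ℵ₀ ≤ κ := hθ.trans hθκ
  have h2θc : 2 ^ c ≤ θ ^ c := power_le_power_right (ofNat_lt_aleph0.trans_le hθ).le
  have h2T : 2 ^ c ≤ max (θ ^ c) κ := h2θc.trans (le_max_left _ _)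
  have hT : ∀ β < κ, β ^ c ≤ max (θ ^ c) κ := fun β hβ => by
    rcases lt_or_ge β θ with hβθ | hθβ
    · exact le_max_of_le_left (power_le_power_right hβθ.le)
    · exact (IH β hβ hθβ).trans (max_le_max le_rfl (succ_le_of_lt hβ))
  rcases lt_or_ge c κ.ord.cof with hcof | hcof
  · calc κ ^ c ≤ κ * max (θ ^ c) κ := power_le_mul_of_lt_cof hcof hT
      _ = max (θ ^ c) κ := mul_eq_right (le_max_of_le_right hκ) (le_max_right _ _)
          (aleph0_pos.trans_le hκ).ne'
      _ ≤ max (θ ^ c) (succ κ) := max_le_max le_rfl (le_succ κ)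
  refine (power_le_power_cof_of_cof_le hc hcof h2T hT).trans ?_
  rcases le_total (θ ^ c) κ with hθcκ | hκθc
  · rw [max_eq_right hθcκ, hsch κ hθκ]
    exact max_le_max ((power_le_power_left two_ne_zero hcof).trans h2θc) le_rfl
  · rw [max_eq_left hκθc, ← power_mul, mul_eq_left hc hcof
      (aleph0_pos.trans_le (aleph0_le_cof_ord hκ)).ne']
    exact le_max_left _ _

theorem power_le_self_of_schAt (hθ : ℵ₀ ≤ θ) (hsch : ∀ κ, θ ≤ κ → SCHAt κ) (hθκ : θ ≤ κ)
    (hc : ℵ₀ ≤ c) (hcof : c < κ.ord.cof) (hθc : θ ^ c ≤ κ) : κ ^ c ≤ κ := by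
  have hT : ∀ β < κ, β ^ c ≤ κ := fun β hβ => by
    rcases lt_or_ge β θ with hβθ | hθβ
    · exact (power_le_power_right hβθ.le).trans hθc
    · exact (power_le_max_of_schAt hθ hsch hc hθβ).trans (max_le hθc (succ_le_of_lt hβ))
  calc κ ^ c ≤ κ * κ := power_le_mul_of_lt_cof hcof hT
    _ = κ := mul_eq_self (hθ.trans hθκ)

variable {S μ : Cardinal.{u}}

theorem power_le_succ_of_forall_power_le (hθ : ℵ₀ ≤ θ) (hsch : ∀ κ, θ ≤ κ → SCHAt κ)
    (hS : ∀ β < θ, ∀ d < μ, β ^ d ≤ S) (hc : ℵ₀ ≤ c) (hcμ : c < μ) : θ ^ c ≤ succ S := by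
  have h2θ : 2 < θ := ofNat_lt_aleph0.trans_le hθ
  have hθsuccS : θ ≤ succ S := not_lt.1 fun hSθ => (lt_succ S).not_ge <| by
    simpa using hS _ hSθ 1 ((one_lt_aleph0.trans_le hc).trans hcμ)
  rcases lt_or_ge c θ.ord.cof with hcof | hcof
  · calc θ ^ c ≤ θ * S := power_le_mul_of_lt_cof hcof fun β hβ => hS β hβ c hcμ
      _ ≤ succ S * succ S := mul_le_mul' hθsuccS (le_succ S)
      _ = succ S := mul_eq_self (hθ.trans hθsuccS)
  have hcofμ : θ.ord.cof < μ := hcof.trans_lt hcμ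
  refine (power_le_power_cof_of_cof_le hc hcof (hS 2 h2θ c hcμ) fun β hβ => hS β hβ c hcμ).trans ?_
  rcases lt_or_ge S θ with hSθ | hθS
  · exact (hS S hSθ _ hcofμ).trans (le_succ S)
  refine (power_le_max_of_schAt hθ hsch (aleph0_le_cof_ord hθ) hθS).trans (max_le ?_ le_rfl)
  rw [hsch θ le_rfl]
  exact max_le ((hS 2 h2θ _ hcofμ).trans (le_succ S)) (succ_le_succ hθS)

theorem power_le_of_forall_power_le_of_le_cof (hθ : ℵ₀ ≤ θ) (hsch : ∀ κ, θ ≤ κ → SCHAt κ)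
    (hS : ∀ β < θ, ∀ d < μ, β ^ d ≤ S) (hθκ : θ ≤ κ) (hSκ : S ≤ κ) (hμκ : μ ≤ κ.ord.cof)
    (hc : ℵ₀ ≤ c) (hcμ : c < μ) : θ ^ c ≤ κ := by
  have h2θ : 2 < θ := ofNat_lt_aleph0.trans_le hθ
  rcases lt_or_ge c θ.ord.cof with hcof | hcof
  · calc θ ^ c ≤ θ * S := power_le_mul_of_lt_cof hcof fun β hβ => hS β hβ c hcμ
      _ ≤ κ * κ := mul_le_mul' hθκ hSκ
      _ = κ := mul_eq_self (hθ.trans hθκ)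
  have hcofμ : θ.ord.cof < μ := hcof.trans_lt hcμ
  have hcofκ : θ.ord.cof < κ.ord.cof := hcofμ.trans_le hμκ
  have hθκ' : θ < κ := hθκ.lt_of_ne fun h => hcofκ.ne (by rw [h])
  have hθcof : θ ^ θ.ord.cof ≤ κ := by
    rw [hsch θ le_rfl]
    exact max_le ((hS 2 h2θ _ hcofμ).trans hSκ) (succ_le_of_lt hθκ')
  calc θ ^ c ≤ S ^ θ.ord.cof :=
        power_le_power_cof_of_cof_le hc hcof (hS 2 h2θ c hcμ) fun β hβ => hS β hβ c hcμ
    _ ≤ κ ^ θ.ord.cof := power_le_power_right hSκ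
    _ ≤ κ := power_le_self_of_schAt hθ hsch hθκ (aleph0_le_cof_ord hθ) hcofκ hθcof

end SCH

theorem stmt3_general {θ : Cardinal.{u}} (hθ : ℵ₀ ≤ θ) (hsch : ∀ lam : Cardinal.{u}, θ ≤ lam → SCHAt lam)
    {μ : Cardinal.{u}} (lam : Cardinal.{u})
    (hgt : (⨆ θ₀ : Set.Iio θ, (θ₀ : Cardinal.{u}) ^< μ) < lam)
    (hnsucc : ¬ ∃ κ : Cardinal.{u}, lam = Order.succ κ ∧ κ.ord.cof < μ) :
    ∀ θ₀ < lam, θ₀ ^< μ < lam := by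
  intro θ₀ hθ₀lam
  set S := ⨆ θ₀ : Set.Iio θ, (θ₀ : Cardinal.{u}) ^< μ
  have hS : ∀ β < θ, ∀ d < μ, β ^ d ≤ S := fun β hβ d hd =>
    (le_powerlt β hd).trans (le_ciSup bddAbove_of_small (⟨β, hβ⟩ : Set.Iio θ))
  rcases lt_or_ge θ₀ θ with hθ₀θ | hθθ₀
  · exact (powerlt_le.2 (hS θ₀ hθ₀θ)).trans_lt hgt
  have hθ₀ : ℵ₀ ≤ θ₀ := hθ.trans hθθ₀
  set κ := max S θ₀
  rcases (succ_le_of_lt (max_lt hgt hθ₀lam)).eq_or_lt with hlam | hlam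
  · have hμκ : μ ≤ κ.ord.cof := not_lt.1 fun h => hnsucc ⟨κ, hlam.symm, h⟩
    have hθκ : θ ≤ κ := hθθ₀.trans (le_max_right _ _)
    refine (powerlt_le_of_forall_aleph0_le hθ₀ (le_max_right _ _) fun c hc hcμ => ?_).trans_lt
      (hlam ▸ lt_succ κ)
    calc θ₀ ^ c ≤ κ ^ c := power_le_power_right (le_max_right _ _)
      _ ≤ κ := power_le_self_of_schAt hθ hsch hθκ hc (hcμ.trans_le hμκ)
        (power_le_of_forall_power_le_of_le_cof hθ hsch hS hθκ (le_max_left _ _) hμκ hc hcμ)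
  refine (powerlt_le_of_forall_aleph0_le hθ₀ ((le_max_right _ _).trans (le_succ κ))
    fun c hc hcμ => ?_).trans_lt hlam
  calc θ₀ ^ c ≤ max (θ ^ c) (succ θ₀) := power_le_max_of_schAt hθ hsch hc hθθ₀
    _ ≤ max (succ S) (succ θ₀) :=
      max_le_max (power_le_succ_of_forall_power_le hθ hsch hS hc hcμ) le_rfl
    _ = succ κ := (Order.succ_max S θ₀).symm

/-- If SCH holds above an infinite cardinal `θ` and `μ` is regular, then every cardinal `λ`
strictly greater than `sup_{θ₀ < θ} θ₀^{<μ}` which is not the successor of a cardinal of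
cofinality `< μ` is `μ`-closed. -/
theorem stmt3 {θ : Cardinal.{u}} (hθ : ℵ₀ ≤ θ) (hsch : ∀ lam : Cardinal.{u}, θ ≤ lam → SCHAt lam)
    {μ : Cardinal.{u}} (hμ : μ.IsRegular) (lam : Cardinal.{u})
    (hgt : (⨆ θ₀ : Set.Iio θ, (θ₀ : Cardinal.{u}) ^< μ) < lam)
    (hnsucc : ¬ ∃ κ : Cardinal.{u}, lam = Order.succ κ ∧ κ.ord.cof < μ) :
    ∀ θ₀ < lam, θ₀ ^< μ < lam :=
  stmt3_general hθ hsch lam hgt hnsucc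
end
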